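/- arXiv:2603.23031 — 8 statements merged into one kernel-verified Lean document; each statement's English description precedes it below -/
import Mathlib

section
/- Let G be a simple graph and let u, v, w be pairwise distinct vertices of G. If u and v are modular symmetric and v and w are modular symmetric, then u and w are modular symmetric. Consequently, modular symmetry (together with reflexivity) induces a partition of the vertex set of G into equivalence classes. -/
/-- The negative (open) neighborhood of a vertex. -/
def negN {V : Type*} (G : SimpleGraph V) (v : V) : Set V := G.neighborSet v

/-- The positive (closed) neighborhood of a vertex. -/
def posN {V : Type*} (G : SimpleGraph V) (v : V) : Set V := insert v (G.neighborSet v)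

/-- Two vertices are modular symmetric if they share the same open neighborhood
or the same closed neighborhood. -/
def ModularSym {V : Type*} (G : SimpleGraph V) (u v : V) : Prop :=
  negN G u = negN G v ∨ posN G u = posN G v

/-- Modular symmetry is transitive on pairwise distinct vertices, so (together with
reflexivity) it partitions the vertex set into equivalence classes. -/
theorem modularSym_trans {V : Type*} (G : SimpleGraph V) (u v w : V)
    (huv : u ≠ v) (hvw : v ≠ w) (huw : u ≠ w)
    (h1 : ModularSym G u v) (h2 : ModularSym G v w) :
    ModularSym G u w := by
  unfold ModularSym negN posN at *
  rcases h1 with h1 | h1 <;> rcases h2 with h2 | h2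
  · exact Or.inl (h1.trans h2)
  · exfalso
    have hw : w ∈ G.neighborSet v := by
      have hmem : w ∈ insert v (G.neighborSet v) := by
        rw [h2]; exact Set.mem_insert _ _
      rcases hmem with h | h
      · exact absurd h.symm hvw
      · exact h
    have hu : u ∈ G.neighborSet w := by
      rw [← h1] at hw
      exact (SimpleGraph.mem_neighborSet _ _ _).2 ((SimpleGraph.mem_neighborSet _ _ _).1 hw).symm
    have hmem : u ∈ insert v (G.neighborSet v) := by
      rw [h2]; exact Set.mem_insert_of_mem _ hu
    rcases hmem with h | h
    · exact huv h
    · rw [← h1] at h; exact G.loopless.irrefl u h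
  · exfalso
    have hu : u ∈ G.neighborSet v := by
      have hmem : u ∈ insert v (G.neighborSet v) := by
        rw [← h1]; exact Set.mem_insert _ _
      rcases hmem with h | h
      · exact absurd h huv
      · exact h
    have hwu : w ∈ G.neighborSet u := by
      rw [h2] at hu
      exact (SimpleGraph.mem_neighborSet _ _ _).2 ((SimpleGraph.mem_neighborSet _ _ _).1 hu).symm
    have hmem : w ∈ insert v (G.neighborSet v) := by
      rw [← h1]; exact Set.mem_insert_of_mem _ hwu
    rcases hmem with h | h
    · exact hvw h.symm
    · rw [h2] at h; exact G.loopless.irrefl w h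
  · exact Or.inr (h1.trans h2)
end

section
/- Let G and H be simple graphs, S a set of vertices of G, and φ a common-subgraph mapping on S from G to H. Let v₁, v₂ ∈ S be distinct vertices of G that are modular symmetric in G. Then φ ∘ σ is again a common-subgraph mapping on S, where σ is the transposition of v₁ and v₂; moreover φ ∘ σ has the same image on S as φ. -/
/-- `φ` is a common-subgraph mapping on `S` from `G` to `H`:
injective on `S` and preserving/reflecting adjacency on `S`. -/
def IsCSM {V W : Type*} (G : SimpleGraph V) (H : SimpleGraph W)
    (S : Set V) (φ : V → W) : Prop :=
  Set.InjOn φ S ∧ ∀ a ∈ S, ∀ b ∈ S, (G.Adj a b ↔ H.Adj (φ a) (φ b))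

/-- Precomposing a common-subgraph mapping with the transposition of two modular
symmetric vertices inside `S` yields again a common-subgraph mapping on `S`,
with the same image. -/
theorem csm_comp_swap_var {V W : Type*} [DecidableEq V]
    (G : SimpleGraph V) (H : SimpleGraph W) (S : Set V) (φ : V → W)
    (hφ : IsCSM G H S φ) (v₁ v₂ : V) (h₁ : v₁ ∈ S) (h₂ : v₂ ∈ S)
    (hne : v₁ ≠ v₂) (hsym : ModularSym G v₁ v₂) :
    IsCSM G H S (φ ∘ Equiv.swap v₁ v₂) ∧
      (φ ∘ Equiv.swap v₁ v₂) '' S = φ '' S := by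
  -- For vertices other than v₁, v₂, adjacency to v₁ and v₂ agree.
  have hadj : ∀ x, x ≠ v₁ → x ≠ v₂ → (G.Adj v₁ x ↔ G.Adj v₂ x) := by
    intro x hx1 hx2
    rcases hsym with h | h
    · have := Set.ext_iff.mp h x
      simpa [negN, SimpleGraph.mem_neighborSet] using this
    · have := Set.ext_iff.mp h x
      simp only [posN, Set.mem_insert_iff, SimpleGraph.mem_neighborSet] at this
      constructor
      · intro ha
        rcases this.mp (Or.inr ha) with h' | h'
        · exact absurd h' hx2
        · exact h'
      · intro ha
        rcases this.mpr (Or.inr ha) with h' | h'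
        · exact absurd h' hx1
        · exact h'
  -- Swapping preserves adjacency in G.
  have key : ∀ a b, G.Adj a b ↔ G.Adj (Equiv.swap v₁ v₂ a) (Equiv.swap v₁ v₂ b) := by
    intro a b
    by_cases ha1 : a = v₁
    · rw [ha1, Equiv.swap_apply_left]
      by_cases hb1 : b = v₁
      · rw [hb1, Equiv.swap_apply_left]; simp
      by_cases hb2 : b = v₂
      · rw [hb2, Equiv.swap_apply_right]; exact G.adj_comm v₁ v₂
      · rw [Equiv.swap_apply_of_ne_of_ne hb1 hb2]; exact hadj b hb1 hb2
    by_cases ha2 : a = v₂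
    · rw [ha2, Equiv.swap_apply_right]
      by_cases hb1 : b = v₁
      · rw [hb1, Equiv.swap_apply_left]; exact G.adj_comm v₂ v₁
      by_cases hb2 : b = v₂
      · rw [hb2, Equiv.swap_apply_right]; simp
      · rw [Equiv.swap_apply_of_ne_of_ne hb1 hb2]; exact (hadj b hb1 hb2).symm
    rw [Equiv.swap_apply_of_ne_of_ne ha1 ha2]
    by_cases hb1 : b = v₁
    · rw [hb1, Equiv.swap_apply_left, G.adj_comm, G.adj_comm a v₂]
      exact hadj a ha1 ha2
    by_cases hb2 : b = v₂
    · rw [hb2, Equiv.swap_apply_right, G.adj_comm, G.adj_comm a v₁]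
      exact (hadj a ha1 ha2).symm
    · rw [Equiv.swap_apply_of_ne_of_ne hb1 hb2]
  -- The swap maps S into S.
  have hmem : ∀ a ∈ S, Equiv.swap v₁ v₂ a ∈ S := by
    intro a ha
    rcases eq_or_ne a v₁ with rfl | ha1
    · simpa [Equiv.swap_apply_left] using h₂
    rcases eq_or_ne a v₂ with rfl | ha2
    · simpa [Equiv.swap_apply_right] using h₁
    · simpa [Equiv.swap_apply_of_ne_of_ne ha1 ha2] using ha
  have himg : (Equiv.swap v₁ v₂) '' S = S := by
    apply Set.Subset.antisymm
    · rintro x ⟨y, hy, rfl⟩; exact hmem y hy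
    · intro x hx
      exact ⟨Equiv.swap v₁ v₂ x, hmem x hx, Equiv.swap_apply_self _ _ _⟩
  refine ⟨⟨?_, ?_⟩, ?_⟩
  · intro a ha b hb hab
    have := hφ.1 (hmem a ha) (hmem b hb) hab
    exact (Equiv.swap v₁ v₂).injective this
  · intro a ha b hb
    exact (key a b).trans (hφ.2 _ (hmem a ha) _ (hmem b hb))
  · rw [Set.image_comp, himg]
end

section
/- Let G and H be simple graphs, S a set of vertices of G, and φ a common-subgraph mapping on S from G to H. Let v₁, v₂ be distinct vertices of G that are modular symmetric in G, with v₂ ∈ S and v₁ ∉ S. Let S' = (S \ {v₂}) ∪ {v₁} and ψ = φ ∘ σ, where σ is the transposition of v₁ and v₂. Then ψ is a common-subgraph mapping on S', the set S' has the same cardinality as S, and ψ has the same image on S' as φ has on S. -/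
lemma modsym_adj {V : Type*} {G : SimpleGraph V} {v₁ v₂ b : V}
    (hsym : ModularSym G v₁ v₂) (hb1 : b ≠ v₁) (hb2 : b ≠ v₂) :
    G.Adj v₁ b ↔ G.Adj v₂ b := by
  rcases hsym with h | h
  · have := Set.ext_iff.mp h b
    simpa [negN, SimpleGraph.mem_neighborSet] using this
  · have := Set.ext_iff.mp h b
    simp only [posN, Set.mem_insert_iff, SimpleGraph.mem_neighborSet] at this
    constructor
    · intro hadj
      rcases this.mp (Or.inr hadj) with h' | h'
      · exact absurd h' hb2
      · exact h'
    · intro hadj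
      rcases this.mpr (Or.inr hadj) with h' | h'
      · exact absurd h' hb1
      · exact h'

/-- Swapping a matched vertex `v₂ ∈ S` with an unmatched modular symmetric vertex
`v₁ ∉ S` yields a common-subgraph mapping on `S' = (S \ {v₂}) ∪ {v₁}` of the same
size and with the same image. -/
theorem csm_swap_in_unmatched {V W : Type*} [DecidableEq V]
    (G : SimpleGraph V) (H : SimpleGraph W) (S : Set V) (φ : V → W)
    (hφ : IsCSM G H S φ) (v₁ v₂ : V) (hne : v₁ ≠ v₂)
    (hsym : ModularSym G v₁ v₂) (h₂ : v₂ ∈ S) (h₁ : v₁ ∉ S) :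
    IsCSM G H ((S \ {v₂}) ∪ {v₁}) (φ ∘ Equiv.swap v₁ v₂) ∧
      ((S \ {v₂}) ∪ {v₁}).ncard = S.ncard ∧
      (φ ∘ Equiv.swap v₁ v₂) '' ((S \ {v₂}) ∪ {v₁}) = φ '' S := by
  set σ := Equiv.swap v₁ v₂ with hσ
  obtain ⟨hinj, hadj⟩ := hφ
  -- σ fixes elements of S \ {v₂}
  have hfix : ∀ x ∈ S \ ({v₂} : Set V), σ x = x := by
    intro x hx
    have hx1 : x ≠ v₁ := fun h => h₁ (h ▸ hx.1)
    exact Equiv.swap_apply_of_ne_of_ne hx1 hx.2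
  have himg : σ '' ((S \ {v₂}) ∪ {v₁}) = S := by
    rw [Set.image_union]
    have h1 : σ '' (S \ {v₂}) = S \ {v₂} := by
      ext y
      constructor
      · rintro ⟨x, hx, rfl⟩; rwa [hfix x hx]
      · intro hy; exact ⟨y, hy, hfix y hy⟩
    have h2 : σ '' ({v₁} : Set V) = {v₂} := by
      simp [hσ, Equiv.swap_apply_left]
    rw [h1, h2, Set.diff_union_self, Set.union_eq_self_of_subset_right]
    simpa using h₂
  have hmem : ∀ x ∈ (S \ {v₂}) ∪ ({v₁} : Set V), σ x ∈ S := by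
    intro x hx
    have : σ x ∈ σ '' ((S \ {v₂}) ∪ {v₁}) := Set.mem_image_of_mem σ hx
    rwa [himg] at this
  refine ⟨⟨?_, ?_⟩, ?_, ?_⟩
  · -- InjOn
    intro a ha b hb h
    have := hinj (hmem a ha) (hmem b hb) h
    exact σ.injective this
  · -- adjacency
    intro a ha b hb
    have key : ∀ x ∈ (S \ {v₂}) ∪ ({v₁} : Set V), ∀ y ∈ S \ ({v₂} : Set V),
        (G.Adj x y ↔ G.Adj (σ x) y) := by
      intro x hx y hy
      rcases hx with hx | hx
      · rw [hfix x hx]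
      · simp only [Set.mem_singleton_iff] at hx
        rw [hx, show σ v₁ = v₂ from Equiv.swap_apply_left v₁ v₂]
        have hy1 : y ≠ v₁ := fun h => h₁ (h ▸ hy.1)
        exact modsym_adj hsym hy1 hy.2
    have step : G.Adj a b ↔ G.Adj (σ a) (σ b) := by
      rcases hb with hb' | hb'
      · rw [hfix b hb']
        exact key a ha b hb'
      · simp only [Set.mem_singleton_iff] at hb'
        rw [hb', show σ v₁ = v₂ from Equiv.swap_apply_left v₁ v₂]
        rcases ha with ha' | ha'
        · have ha1 : a ≠ v₁ := fun h => h₁ (h ▸ ha'.1)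
          rw [show σ a = a from Equiv.swap_apply_of_ne_of_ne ha1 ha'.2]
          rw [G.adj_comm a v₁, G.adj_comm a v₂]
          exact modsym_adj hsym ha1 ha'.2
        · simp only [Set.mem_singleton_iff] at ha'
          rw [ha', show σ v₁ = v₂ from Equiv.swap_apply_left v₁ v₂]
          simp
    rw [step]
    exact hadj _ (hmem a ha) _ (hmem b hb)
  · -- ncard
    conv_rhs => rw [← himg]
    rw [Set.ncard_image_of_injective _ σ.injective]
  · -- image
    rw [Set.image_comp, himg]
end

section
/- Let G and H be finite simple graphs with linear orders on their vertex sets, S a set of vertices of G, and φ a common-subgraph mapping on S from G to H. Then there exist a set S' of vertices of G and a common-subgraph mapping ψ on S' such that |S'| = |S|, ψ has the same image on S' as φ has on S, and for every pair of distinct vertices v₁ < v₂ of G that are modular symmetric in G, if v₂ ∈ S' then v₁ ∈ S' and ψ(v₁) < ψ(v₂). (This is the completeness guarantee of variable symmetry breaking: some mapping of every size that occurs is canonical with respect to the variable-graph symmetries.) -/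
open scoped Classical

/-- The rank of an element in a finite linear order. -/
noncomputable def rk {α : Type*} [Fintype α] [LinearOrder α] (a : α) : ℕ :=
  (Finset.univ.filter (· < a)).card

lemma rk_lt {α : Type*} [Fintype α] [LinearOrder α] {a b : α} (h : a < b) : rk a < rk b := by
  apply Finset.card_lt_card
  rw [Finset.ssubset_def]
  constructor
  · intro x hx
    simp only [Finset.mem_filter, Finset.mem_univ, true_and] at hx ⊢
    exact lt_trans hx h
  · intro hsub
    have := hsub (Finset.mem_filter.2 ⟨Finset.mem_univ a, h⟩)
    simp at this

lemma rk_le_sup {α : Type*} [Fintype α] [LinearOrder α] (a : α) :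
    rk a ≤ Finset.univ.sup (rk (α := α)) :=
  Finset.le_sup (Finset.mem_univ a)

lemma nbr_of_modular {V : Type*} {G : SimpleGraph V} {v₁ v₂ a : V}
    (h : ModularSym G v₁ v₂) (h1 : a ≠ v₁) (h2 : a ≠ v₂) :
    G.Adj v₁ a ↔ G.Adj v₂ a := by
  rcases h with h | h
  · have := Set.ext_iff.1 h a
    simpa [negN, SimpleGraph.mem_neighborSet] using this
  · have := Set.ext_iff.1 h a
    simpa [posN, SimpleGraph.mem_neighborSet, Set.mem_insert_iff, h1, h2] using this

lemma swap_adj {V : Type*} [DecidableEq V] {G : SimpleGraph V} {v₁ v₂ : V}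
    (h : ModularSym G v₁ v₂) (a b : V) :
    G.Adj (Equiv.swap v₁ v₂ a) (Equiv.swap v₁ v₂ b) ↔ G.Adj a b := by
  have key : ∀ x y, G.Adj x y → G.Adj (Equiv.swap v₁ v₂ x) (Equiv.swap v₁ v₂ y) := by
    intro x y hxy
    by_cases hx1 : x = v₁
    · rw [hx1] at hxy ⊢
      by_cases hy1 : y = v₁
      · exact absurd (hy1 ▸ hxy) (G.loopless.irrefl _)
      by_cases hy2 : y = v₂
      · rw [hy2] at hxy ⊢
        simpa using hxy.symm
      · simp only [Equiv.swap_apply_left, Equiv.swap_apply_of_ne_of_ne hy1 hy2]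
        exact (nbr_of_modular h hy1 hy2).1 hxy
    by_cases hx2 : x = v₂
    · rw [hx2] at hxy ⊢
      by_cases hy2 : y = v₂
      · exact absurd (hy2 ▸ hxy) (G.loopless.irrefl _)
      by_cases hy1 : y = v₁
      · rw [hy1] at hxy ⊢
        simpa using hxy.symm
      · simp only [Equiv.swap_apply_right, Equiv.swap_apply_of_ne_of_ne hy1 hy2]
        exact (nbr_of_modular h hy1 hy2).2 hxy
    · by_cases hy1 : y = v₁
      · rw [hy1] at hxy ⊢
        simp only [Equiv.swap_apply_left, Equiv.swap_apply_of_ne_of_ne hx1 hx2]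
        exact ((nbr_of_modular h hx1 hx2).1 hxy.symm).symm
      by_cases hy2 : y = v₂
      · rw [hy2] at hxy ⊢
        simp only [Equiv.swap_apply_right, Equiv.swap_apply_of_ne_of_ne hx1 hx2]
        exact ((nbr_of_modular h hx1 hx2).2 hxy.symm).symm
      · simpa [Equiv.swap_apply_of_ne_of_ne hx1 hx2,
          Equiv.swap_apply_of_ne_of_ne hy1 hy2] using hxy
  constructor
  · intro h'
    have := key _ _ h'
    simpa using this
  · exact key a b

/-- Measure function for the exchange argument. -/
noncomputable def measOf {V W : Type*} [Fintype V] [LinearOrder V]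
    [Fintype W] [LinearOrder W] (S : Set V) (ψ : V → W) : ℕ :=
  ∑ v ∈ Finset.univ.filter (· ∈ S),
    rk v * (Finset.univ.sup (rk (α := W)) + 1 - rk (ψ v))

lemma csm_swap {V W : Type*} [DecidableEq V] (G : SimpleGraph V) (H : SimpleGraph W)
    (S : Set V) (ψ : V → W) (h : IsCSM G H S ψ) {v₁ v₂ : V}
    (hms : ModularSym G v₁ v₂) :
    IsCSM G H ((Equiv.swap v₁ v₂) '' S) (ψ ∘ (Equiv.swap v₁ v₂)) := by
  have hmem : ∀ a ∈ (Equiv.swap v₁ v₂) '' S, (Equiv.swap v₁ v₂) a ∈ S := by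
    rintro a ⟨c, hc, rfl⟩
    simpa [Equiv.swap_apply_self] using hc
  constructor
  · intro a ha b hb hab
    have h1 := h.1 (hmem a ha) (hmem b hb) hab
    have h2 := congrArg (Equiv.swap v₁ v₂) h1
    simpa [Equiv.swap_apply_self] using h2
  · intro a ha b hb
    rw [← swap_adj hms a b]
    exact h.2 _ (hmem a ha) _ (hmem b hb)

/-- Completeness of variable symmetry breaking: every common-subgraph mapping can be
replaced by one of the same size that is canonical with respect to the modular
symmetries of the variable graph `G`. -/
theorem variable_symmetry_breaking_complete {V W : Type*}
    [Fintype V] [LinearOrder V] [Fintype W] [LinearOrder W]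
    (G : SimpleGraph V) (H : SimpleGraph W) (S : Set V) (φ : V → W)
    (hφ : IsCSM G H S φ) :
    ∃ (S' : Set V) (ψ : V → W), IsCSM G H S' ψ ∧ S'.ncard = S.ncard ∧
      ψ '' S' = φ '' S ∧
      ∀ v₁ v₂ : V, v₁ < v₂ → ModularSym G v₁ v₂ → v₂ ∈ S' →
        v₁ ∈ S' ∧ ψ v₁ < ψ v₂ := by
  -- step lemma: fix a violation, reducing the measure
  have step : ∀ (T : Set V) (ψ : V → W), IsCSM G H T ψ →
      ¬ (∀ v₁ v₂ : V, v₁ < v₂ → ModularSym G v₁ v₂ → v₂ ∈ T →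
          v₁ ∈ T ∧ ψ v₁ < ψ v₂) →
      ∃ (T' : Set V) (ψ' : V → W), IsCSM G H T' ψ' ∧ T'.ncard = T.ncard ∧
        ψ' '' T' = ψ '' T ∧ measOf T' ψ' < measOf T ψ := by
    intro T ψ hcsm hviol
    push_neg at hviol
    obtain ⟨v₁, v₂, hlt, hms, hv₂, hbad⟩ := hviol
    have hne : v₁ ≠ v₂ := ne_of_lt hlt
    refine ⟨(Equiv.swap v₁ v₂) '' T, ψ ∘ (Equiv.swap v₁ v₂),
      csm_swap G H T ψ hcsm hms,
      Set.ncard_image_of_injective T (Equiv.swap v₁ v₂).injective, ?_, ?_⟩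
    · ext w
      simp only [Set.mem_image, Function.comp_apply]
      constructor
      · rintro ⟨x, ⟨y, hy, rfl⟩, rfl⟩
        exact ⟨y, hy, by simp [Equiv.swap_apply_self]⟩
      · rintro ⟨y, hy, rfl⟩
        exact ⟨Equiv.swap v₁ v₂ y, ⟨y, hy, rfl⟩, by simp [Equiv.swap_apply_self]⟩
    · -- measure decreases
      have hc1 : ∀ v : V, 1 ≤ Finset.univ.sup (rk (α := W)) + 1 - rk (ψ v) := by
        intro v
        have := rk_le_sup (ψ v)
        omega
      set F := Finset.univ.filter (· ∈ T) with hF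
      have hold : measOf T ψ =
          ∑ v ∈ F, rk v * (Finset.univ.sup (rk (α := W)) + 1 - rk (ψ v)) := rfl
      have hnew : measOf ((Equiv.swap v₁ v₂) '' T) (ψ ∘ (Equiv.swap v₁ v₂)) =
          ∑ v ∈ F, rk (Equiv.swap v₁ v₂ v) *
            (Finset.univ.sup (rk (α := W)) + 1 - rk (ψ v)) := by
        rw [measOf]
        refine (Finset.sum_equiv (Equiv.swap v₁ v₂) ?_ ?_).symm
        · intro i
          simp only [hF, Finset.mem_filter, Finset.mem_univ, true_and, Set.mem_image]
          constructor
          · intro hi; exact ⟨i, hi, rfl⟩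
          · rintro ⟨j, hj, hji⟩
            have : j = i := (Equiv.swap v₁ v₂).injective hji
            rwa [← this]
        · intro i hi
          simp [Equiv.swap_apply_self]
      rw [hnew, hold]
      by_cases hv₁ : v₁ ∈ T
      · -- both in T; ψ v₂ < ψ v₁ since ¬(ψ v₁ < ψ v₂) and injective
        have hψne : ψ v₁ ≠ ψ v₂ := fun e => hne (hcsm.1 hv₁ hv₂ e)
        have hψlt : ψ v₂ < ψ v₁ := lt_of_le_of_ne (hbad hv₁) hψne.symm
        have hv₁F : v₁ ∈ F := by simp [hF, hv₁]
        have hv₂F : v₂ ∈ F := by simp [hF, hv₂]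
        have hv₂e : v₂ ∈ F.erase v₁ := Finset.mem_erase.2 ⟨hne.symm, hv₂F⟩
        set T' := (F.erase v₁).erase v₂ with hT'
        have hFeq : F = insert v₁ (insert v₂ T') := by
          rw [hT', Finset.insert_erase hv₂e, Finset.insert_erase hv₁F]
        have hv₁ni : v₁ ∉ insert v₂ T' := by
          intro hmem
          rcases Finset.mem_insert.1 hmem with h' | h'
          · exact hne h'
          · exact Finset.notMem_erase v₁ F (Finset.mem_of_mem_erase h')
        have hv₂ni : v₂ ∉ T' := Finset.notMem_erase _ _
        rw [hFeq, Finset.sum_insert hv₁ni, Finset.sum_insert hv₁ni,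
          Finset.sum_insert hv₂ni, Finset.sum_insert hv₂ni]
        have hrest : ∀ i ∈ T', rk (Equiv.swap v₁ v₂ i) *
            (Finset.univ.sup (rk (α := W)) + 1 - rk (ψ i)) =
            rk i * (Finset.univ.sup (rk (α := W)) + 1 - rk (ψ i)) := by
          intro i hi
          have hi2 : i ≠ v₂ := (Finset.mem_erase.1 hi).1
          have hi1 : i ≠ v₁ := (Finset.mem_erase.1 (Finset.mem_erase.1 hi).2).1
          rw [Equiv.swap_apply_of_ne_of_ne hi1 hi2]
        rw [Finset.sum_congr rfl hrest, Equiv.swap_apply_left, Equiv.swap_apply_right]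
        have hr : rk v₁ < rk v₂ := rk_lt hlt
        have hcc : Finset.univ.sup (rk (α := W)) + 1 - rk (ψ v₁) <
            Finset.univ.sup (rk (α := W)) + 1 - rk (ψ v₂) := by
          have h3 : rk (ψ v₂) < rk (ψ v₁) := rk_lt hψlt
          have h4 : rk (ψ v₁) ≤ Finset.univ.sup (rk (α := W)) := rk_le_sup _
          omega
        have hkey : rk v₂ * (Finset.univ.sup (rk (α := W)) + 1 - rk (ψ v₁)) +
            rk v₁ * (Finset.univ.sup (rk (α := W)) + 1 - rk (ψ v₂)) <
            rk v₁ * (Finset.univ.sup (rk (α := W)) + 1 - rk (ψ v₁)) +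
            rk v₂ * (Finset.univ.sup (rk (α := W)) + 1 - rk (ψ v₂)) := by
          nlinarith
        omega
      · -- v₁ ∉ T: pointwise comparison, strict at v₂
        apply Finset.sum_lt_sum
        · intro i hi
          simp only [hF, Finset.mem_filter, Finset.mem_univ, true_and] at hi
          by_cases hi2 : i = v₂
          · subst hi2
            rw [Equiv.swap_apply_right]
            exact Nat.mul_le_mul_right _ (le_of_lt (rk_lt hlt))
          · have hi1 : i ≠ v₁ := fun e => hv₁ (e ▸ hi)
            rw [Equiv.swap_apply_of_ne_of_ne hi1 hi2]
        · refine ⟨v₂, by simp [hF, hv₂], ?_⟩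
          rw [Equiv.swap_apply_right]
          exact mul_lt_mul_of_pos_right (rk_lt hlt) (hc1 v₂)
  -- induction on the measure
  suffices h : ∀ n (T : Set V) (ψ : V → W), IsCSM G H T ψ → measOf T ψ ≤ n →
      ∃ (S' : Set V) (ψ' : V → W), IsCSM G H S' ψ' ∧ S'.ncard = T.ncard ∧
        ψ' '' S' = ψ '' T ∧
        ∀ v₁ v₂ : V, v₁ < v₂ → ModularSym G v₁ v₂ → v₂ ∈ S' →
          v₁ ∈ S' ∧ ψ' v₁ < ψ' v₂ by
    exact h (measOf S φ) S φ hφ le_rfl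
  intro n
  induction n with
  | zero =>
    intro T ψ hcsm hm
    by_cases hcond : ∀ v₁ v₂ : V, v₁ < v₂ → ModularSym G v₁ v₂ → v₂ ∈ T →
        v₁ ∈ T ∧ ψ v₁ < ψ v₂
    · exact ⟨T, ψ, hcsm, rfl, rfl, hcond⟩
    · obtain ⟨T', ψ', _, _, _, hlt⟩ := step T ψ hcsm hcond
      omega
  | succ n ih =>
    intro T ψ hcsm hm
    by_cases hcond : ∀ v₁ v₂ : V, v₁ < v₂ → ModularSym G v₁ v₂ → v₂ ∈ T →
        v₁ ∈ T ∧ ψ v₁ < ψ v₂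
    · exact ⟨T, ψ, hcsm, rfl, rfl, hcond⟩
    · obtain ⟨T', ψ', hcsm', hcard', himg', hlt⟩ := step T ψ hcsm hcond
      obtain ⟨S', ψ'', h1, h2, h3, h4⟩ := ih T' ψ' hcsm' (by omega)
      exact ⟨S', ψ'', h1, by rw [h2, hcard'], by rw [h3, himg'], h4⟩
end

section
/- Let G and H be finite simple graphs with a linear order on the vertex set of H, S a set of vertices of G, and φ a common-subgraph mapping on S from G to H. Then there exists a common-subgraph mapping ψ on the same set S such that for every pair of distinct vertices u₁ < u₂ of H that are modular symmetric in H, if u₂ lies in the image of ψ on S then u₁ also lies in the image of ψ on S. (This is the completeness guarantee of value symmetry breaking: the image can always be chosen to consist of the smallest representatives within each symmetry class of the value graph.) -/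
/-- Swapping two modular symmetric vertices preserves adjacency. -/
lemma modularSym_adj_iff {W : Type*} [DecidableEq W] (H : SimpleGraph W) {u₁ u₂ : W}
    (h : ModularSym H u₁ u₂) (a b : W) :
    H.Adj a b ↔ H.Adj (Equiv.swap u₁ u₂ a) (Equiv.swap u₁ u₂ b) := by
  have hx : ∀ x, x ≠ u₁ → x ≠ u₂ → (H.Adj u₁ x ↔ H.Adj u₂ x) := by
    intro x hx1 hx2
    rcases h with h | h
    · have := Set.ext_iff.mp h x
      simpa [negN, SimpleGraph.mem_neighborSet] using this
    · have := Set.ext_iff.mp h x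
      simp only [posN, Set.mem_insert_iff, SimpleGraph.mem_neighborSet] at this
      constructor
      · intro hadj
        rcases this.mp (Or.inr hadj) with h' | h'
        · exact absurd h' hx2
        · exact h'
      · intro hadj
        rcases this.mpr (Or.inr hadj) with h' | h'
        · exact absurd h' hx1
        · exact h'
  have key : ∀ a b, H.Adj a b → H.Adj (Equiv.swap u₁ u₂ a) (Equiv.swap u₁ u₂ b) := by
    intro a b hab
    by_cases ha1 : a = u₁
    · by_cases hb1 : b = u₁
      · exact absurd ((ha1.trans hb1.symm) ▸ hab) (H.irrefl)
      · by_cases hb2 : b = u₂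
        · rw [ha1, hb2, Equiv.swap_apply_left, Equiv.swap_apply_right]
          exact (ha1 ▸ hb2 ▸ hab).symm
        · rw [ha1, Equiv.swap_apply_left, Equiv.swap_apply_of_ne_of_ne hb1 hb2]
          exact (hx b hb1 hb2).mp (ha1 ▸ hab)
    · by_cases ha2 : a = u₂
      · by_cases hb1 : b = u₁
        · rw [ha2, hb1, Equiv.swap_apply_left, Equiv.swap_apply_right]
          exact (ha2 ▸ hb1 ▸ hab).symm
        · by_cases hb2 : b = u₂
          · exact absurd ((ha2.trans hb2.symm) ▸ hab) (H.irrefl)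
          · rw [ha2, Equiv.swap_apply_right, Equiv.swap_apply_of_ne_of_ne hb1 hb2]
            exact (hx b hb1 hb2).mpr (ha2 ▸ hab)
      · by_cases hb1 : b = u₁
        · rw [hb1, Equiv.swap_apply_left, Equiv.swap_apply_of_ne_of_ne ha1 ha2]
          exact ((hx a ha1 ha2).mp (hb1 ▸ hab).symm).symm
        · by_cases hb2 : b = u₂
          · rw [hb2, Equiv.swap_apply_right, Equiv.swap_apply_of_ne_of_ne ha1 ha2]
            exact ((hx a ha1 ha2).mpr (hb2 ▸ hab).symm).symm
          · rw [Equiv.swap_apply_of_ne_of_ne ha1 ha2, Equiv.swap_apply_of_ne_of_ne hb1 hb2]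
            exact hab
  constructor
  · exact key a b
  · intro h'
    have := key _ _ h'
    simpa using this

/-- Completeness of value symmetry breaking: the image of a common-subgraph mapping
can always be chosen to consist of the smallest representatives within each modular
symmetry class of the value graph `H`. -/
theorem value_symmetry_breaking_complete {V W : Type*}
    [Fintype V] [Fintype W] [LinearOrder W]
    (G : SimpleGraph V) (H : SimpleGraph W) (S : Set V) (φ : V → W)
    (hφ : IsCSM G H S φ) :
    ∃ ψ : V → W, IsCSM G H S ψ ∧
      ∀ u₁ u₂ : W, u₁ < u₂ → ModularSym H u₁ u₂ → u₂ ∈ ψ '' S → u₁ ∈ ψ '' S := by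
  classical
  set rank : W → ℕ := fun w => (Finset.univ.filter (fun x => x < w)).card with hrank
  have rank_mono : ∀ {a b : W}, a < b → rank a < rank b := by
    intro a b hab
    apply Finset.card_lt_card
    constructor
    · intro x hx
      simp only [Finset.mem_filter, Finset.mem_univ, true_and] at hx ⊢
      exact hx.trans hab
    · intro hsub
      have := hsub (by simp [hab] : a ∈ Finset.univ.filter (fun x => x < b))
      simp at this
  set m : (V → W) → ℕ := fun ψ => ∑ w ∈ Finset.univ.filter (fun w => w ∈ ψ '' S), rank w
    with hm
  obtain ⟨n, ⟨ψ, hψ, hn⟩, hmin⟩ :=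
    Nat.lt_wfRel.wf.has_min {n | ∃ ψ, IsCSM G H S ψ ∧ m ψ = n} ⟨m φ, φ, hφ, rfl⟩
  refine ⟨ψ, hψ, ?_⟩
  intro u₁ u₂ hlt hsym hu₂
  by_contra hu₁
  set σ := Equiv.swap u₁ u₂ with hσ
  set ψ' := fun v => σ (ψ v) with hψ'def
  have hψ' : IsCSM G H S ψ' := by
    refine ⟨fun a ha b hb hab => hψ.1 ha hb (σ.injective hab), fun a ha b hb => ?_⟩
    exact (hψ.2 a ha b hb).trans (modularSym_adj_iff H hsym _ _)
  have himg : Finset.univ.filter (fun w => w ∈ ψ' '' S)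
      = (Finset.univ.filter (fun w => w ∈ ψ '' S)).image σ := by
    ext w
    simp only [Finset.mem_filter, Finset.mem_univ, true_and, Finset.mem_image, Set.mem_image]
    constructor
    · rintro ⟨v, hv, rfl⟩
      exact ⟨ψ v, ⟨v, hv, rfl⟩, rfl⟩
    · rintro ⟨x, ⟨v, hv, rfl⟩, rfl⟩
      exact ⟨v, hv, rfl⟩
  have hlt' : m ψ' < m ψ := by
    rw [hm]
    simp only
    rw [himg, Finset.sum_image (fun a _ b _ h => σ.injective h)]
    apply Finset.sum_lt_sum
    · intro w hw
      simp only [Finset.mem_filter, Finset.mem_univ, true_and] at hw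
      have hwne1 : w ≠ u₁ := fun h => hu₁ (h ▸ hw)
      by_cases hwe : w = u₂
      · rw [hwe, hσ, Equiv.swap_apply_right]
        exact le_of_lt (rank_mono hlt)
      · rw [hσ, Equiv.swap_apply_of_ne_of_ne hwne1 hwe]
    · refine ⟨u₂, by simpa using hu₂, ?_⟩
      rw [hσ, Equiv.swap_apply_right]
      exact rank_mono hlt
  exact hmin (m ψ') ⟨ψ', hψ', rfl⟩ (hn ▸ hlt')
end

section
/- Let G and H be finite simple graphs with linear orders on their vertex sets, S a set of vertices of G, and φ a common-subgraph mapping on S from G to H. Then there exist a set S' of vertices of G with |S'| = |S| and a common-subgraph mapping ψ on S' that simultaneously satisfies: (i) for every pair of distinct vertices v₁ < v₂ of G that are modular symmetric in G, if v₂ ∈ S' then v₁ ∈ S' and ψ(v₁) < ψ(v₂); and (ii) for every pair of distinct vertices u₁ < u₂ of H that are modular symmetric in H, if u₂ lies in the image of ψ on S' then u₁ also lies in the image of ψ on S'. (This is the compatibility of variable and value symmetry breaking: both canonicity conditions can be enforced simultaneously without losing any mapping size, so dual symmetry breaking preserves completeness.) -/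
section GraphLemmas

variable {V : Type*} (G : SimpleGraph V)

lemma ms_refl (v : V) : ModularSym G v v := Or.inl rfl

lemma ms_symm {u v : V} (h : ModularSym G u v) : ModularSym G v u :=
  h.imp Eq.symm Eq.symm

lemma mem_negN_iff {u v : V} : u ∈ negN G v ↔ G.Adj v u := Iff.rfl

lemma mem_posN_iff {u v : V} : u ∈ posN G v ↔ u = v ∨ G.Adj v u := by
  simp [posN]

lemma neg_not_adj {u v : V} (h : negN G u = negN G v) : ¬ G.Adj u v := by
  intro hadj
  have hv : v ∈ negN G u := (mem_negN_iff G).2 hadj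
  rw [h] at hv
  exact G.irrefl ((mem_negN_iff G).1 hv)

lemma pos_adj {u v : V} (h : posN G u = posN G v) (hne : u ≠ v) : G.Adj u v := by
  have hu : u ∈ posN G u := (mem_posN_iff G).2 (Or.inl rfl)
  rw [h] at hu
  rcases (mem_posN_iff G).1 hu with h' | h'
  · exact absurd h' hne
  · exact h'.symm

lemma mixed_false {u v w : V} (h1 : negN G u = negN G v) (h2 : posN G v = posN G w)
    (huv : u ≠ v) (hvw : v ≠ w) : False := by
  have hvw' : G.Adj v w := pos_adj G h2 hvw
  have hw : w ∈ negN G u := by rw [h1]; exact (mem_negN_iff G).2 hvw'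
  have huw : G.Adj u w := (mem_negN_iff G).1 hw
  have hu : u ∈ posN G v := by
    rw [h2]; exact (mem_posN_iff G).2 (Or.inr huw.symm)
  rcases (mem_posN_iff G).1 hu with h' | h'
  · exact huv h'
  · have : u ∈ negN G v := (mem_negN_iff G).2 h'
    rw [← h1] at this
    exact G.irrefl ((mem_negN_iff G).1 this)

lemma ms_trans {u v w : V} (h1 : ModularSym G u v) (h2 : ModularSym G v w) :
    ModularSym G u w := by
  rcases eq_or_ne u v with rfl | huv
  · exact h2
  rcases eq_or_ne v w with rfl | hvw
  · exact h1
  rcases h1 with h1 | h1 <;> rcases h2 with h2 | h2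
  · exact Or.inl (h1.trans h2)
  · exact (mixed_false G h1 h2 huv hvw).elim
  · exact (mixed_false G h2.symm h1.symm hvw.symm huv.symm).elim
  · exact Or.inr (h1.trans h2)

lemma adj_congr {a a' b : V} (h : ModularSym G a a') (hba : b ≠ a) (hba' : b ≠ a') :
    G.Adj a b ↔ G.Adj a' b := by
  rcases h with h | h
  · constructor
    · intro had
      have : b ∈ negN G a := (mem_negN_iff G).2 had
      rw [h] at this; exact (mem_negN_iff G).1 this
    · intro had
      have : b ∈ negN G a' := (mem_negN_iff G).2 had
      rw [← h] at this; exact (mem_negN_iff G).1 this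
  · constructor
    · intro had
      have : b ∈ posN G a := (mem_posN_iff G).2 (Or.inr had)
      rw [h] at this
      rcases (mem_posN_iff G).1 this with h' | h'
      · exact absurd h' hba'
      · exact h'
    · intro had
      have : b ∈ posN G a' := (mem_posN_iff G).2 (Or.inr had)
      rw [← h] at this
      rcases (mem_posN_iff G).1 this with h' | h'
      · exact absurd h' hba
      · exact h'

lemma clash {a b c d : V} (hab : posN G a = posN G b) (hane : a ≠ b)
    (hcd : negN G c = negN G d) (hcne : c ≠ d) (hac : ModularSym G a c) : False := by
  rcases eq_or_ne a c with rfl | hne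
  · exact mixed_false G hcd.symm hab hcne.symm hane
  · rcases hac with h | h
    · exact mixed_false G h.symm hab hne.symm hane
    · exact mixed_false G hcd.symm h.symm hcne.symm hne.symm

lemma adj_of_class {s t s₁ t₁ : V} (hst : ModularSym G s t) (hss : ModularSym G s s₁)
    (h₁ : ModularSym G s₁ t₁) (hne₁ : s₁ ≠ t₁) (hadj : G.Adj s t) : G.Adj s₁ t₁ := by
  rcases hst with h | h
  · exact absurd hadj (neg_not_adj G h)
  · rcases h₁ with h₁ | h₁
    · exact (clash G h (G.ne_of_adj hadj) h₁ hne₁ hss).elim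
    · exact pos_adj G h₁ hne₁

lemma adj_transfer {s t s₁ t₁ : V} (hs : ModularSym G s s₁) (ht : ModularSym G t t₁)
    (hne : s ≠ t) (hne₁ : s₁ ≠ t₁) : G.Adj s t ↔ G.Adj s₁ t₁ := by
  by_cases hst : ModularSym G s t
  · have h₁ : ModularSym G s₁ t₁ := ms_trans G (ms_trans G (ms_symm G hs) hst) ht
    constructor
    · exact fun h => adj_of_class G hst hs h₁ hne₁ h
    · exact fun h => adj_of_class G h₁ (ms_symm G hs) hst hne h
  · have hts₁ : t ≠ s₁ := fun h => hst (h ▸ hs)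
    have h1 : G.Adj s t ↔ G.Adj s₁ t := adj_congr G hs hne.symm hts₁
    have h2 : G.Adj t s₁ ↔ G.Adj t₁ s₁ := adj_congr G ht hts₁.symm hne₁
    rw [h1, G.adj_comm s₁ t, h2, G.adj_comm t₁ s₁]

end GraphLemmas

open Classical in
/-- The main combinatorial gadget: given an equivalence relation `R` on a finite
linear order, and an injective-on-`A` map `F`, there is a "normalized" set `A'`
(taking the least elements of each class) and a map `ψ` that is classwise
order-preserving, has the same image as `F` on `A`, and pointwise agrees with `F`
up to the class. -/
lemma gadget {α β : Type*} [Fintype α] [LinearOrder α] [LinearOrder β]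
    {R : α → α → Prop} (hrefl : ∀ a, R a a) (hsymm : ∀ {a b}, R a b → R b a)
    (htrans : ∀ {a b c}, R a b → R b c → R a c)
    (A : Set α) (F : α → β) (hF : Set.InjOn F A) :
    ∃ (A' : Set α) (ψ : α → β),
      Set.InjOn ψ A' ∧ ψ '' A' = F '' A ∧ A'.ncard = A.ncard ∧
      (∀ v ∈ A', ∃ s ∈ A, R v s ∧ ψ v = F s) ∧
      (∀ v₁ v₂ : α, v₁ < v₂ → R v₁ v₂ → v₂ ∈ A' → v₁ ∈ A') ∧
      (∀ v₁ v₂ : α, v₁ < v₂ → R v₁ v₂ → v₁ ∈ A' → v₂ ∈ A' → ψ v₁ < ψ v₂) := by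
  classical
  set C : α → Finset α := fun v => Finset.univ.filter (fun u => R u v) with hC
  set AC : α → Finset α := fun v => Finset.univ.filter (fun u => R u v ∧ u ∈ A) with hAC
  set Lc : α → List α := fun v => (C v).sort (· ≤ ·) with hLc
  set Lb : α → List β := fun v => ((AC v).image F).sort (· ≤ ·) with hLb
  set k : α → ℕ := fun v => (AC v).card with hk
  have hCeq : ∀ {v w}, R v w → C v = C w := by
    intro v w h
    ext u
    simp only [hC, Finset.mem_filter, Finset.mem_univ, true_and]
    exact ⟨fun hu => htrans hu h, fun hu => htrans hu (hsymm h)⟩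
  have hACeq : ∀ {v w}, R v w → AC v = AC w := by
    intro v w h
    ext u
    simp only [hAC, Finset.mem_filter, Finset.mem_univ, true_and]
    exact ⟨fun hu => ⟨htrans hu.1 h, hu.2⟩, fun hu => ⟨htrans hu.1 (hsymm h), hu.2⟩⟩
  have hFinjAC : ∀ v, Set.InjOn F (AC v : Set α) := by
    intro v
    apply hF.mono
    intro u hu
    simp only [hAC, Finset.coe_filter, Set.mem_setOf_eq] at hu
    exact hu.2.2
  have hlenLb : ∀ v, (Lb v).length = k v := by
    intro v
    simp only [hLb, Finset.length_sort]
    exact Finset.card_image_of_injOn (hFinjAC v)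
  have hlenLc : ∀ v, (Lc v).length = (C v).card := fun v => Finset.length_sort _
  have hkle : ∀ v, k v ≤ (C v).card := by
    intro v
    apply Finset.card_le_card
    intro u hu
    simp only [hAC, Finset.mem_filter, Finset.mem_univ, true_and] at hu
    simp only [hC, Finset.mem_filter, Finset.mem_univ, true_and]
    exact hu.1
  have hmemLc : ∀ v, v ∈ Lc v := by
    intro v
    simp only [hLc]
    simp only [Finset.mem_sort, hC, Finset.mem_filter, Finset.mem_univ, true_and]
    exact hrefl v
  have hidxlt : ∀ v, (Lc v).idxOf v < (Lc v).length :=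
    fun v => List.idxOf_lt_length_iff.2 (hmemLc v)
  -- index is strictly monotone within a class
  have hidx : ∀ {v₁ v₂}, R v₁ v₂ → v₁ < v₂ →
      (Lc v₁).idxOf v₁ < (Lc v₂).idxOf v₂ := by
    intro v₁ v₂ hR hlt
    have hLceq : Lc v₁ = Lc v₂ := by simp only [hLc]; rw [hCeq hR]
    have h₁ : (Lc v₂).idxOf v₁ < (Lc v₂).length := by
      rw [← hLceq]; exact hidxlt v₁
    have h₂ : (Lc v₂).idxOf v₂ < (Lc v₂).length := hidxlt v₂
    have hg₁ : (Lc v₂).get ⟨_, h₁⟩ = v₁ := List.idxOf_get h₁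
    have hg₂ : (Lc v₂).get ⟨_, h₂⟩ = v₂ := List.idxOf_get h₂
    rw [hLceq]
    by_contra hcon
    push_neg at hcon
    rcases lt_or_eq_of_le hcon with hio | hio
    · have := (Finset.sortedLT_sort (C v₂)).pairwise.rel_get_of_lt
        (show (⟨(Lc v₂).idxOf v₂, h₂⟩ : Fin (Lc v₂).length) < ⟨(Lc v₂).idxOf v₁, h₁⟩
          from hio)
      rw [hg₁, hg₂] at this
      exact absurd hlt (asymm this)
    · have : v₂ = v₁ :=
        hg₂.symm.trans ((congrArg (Lc v₂).get (Fin.ext hio)).trans hg₁)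
      exact absurd this.symm (ne_of_lt hlt)
  set A' : Set α := {v | (Lc v).idxOf v < k v} with hA'
  set ψ : α → β := fun v => (Lb v).getD ((Lc v).idxOf v) (F v) with hψ
  have hkeq : ∀ {v w}, R v w → k v = k w := by
    intro v w h; simp only [hk]; rw [hACeq h]
  have hpt : ∀ v ∈ A', ∃ s, s ∈ A ∧ R v s ∧ ψ v = F s := by
    intro v hv
    have hv' : (Lc v).idxOf v < k v := hv
    have hlt : (Lc v).idxOf v < (Lb v).length := by rw [hlenLb v]; exact hv'
    have hget : ψ v = (Lb v).get ⟨_, hlt⟩ := List.getD_eq_getElem _ _ hlt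
    have hmem : (Lb v).get ⟨_, hlt⟩ ∈ Lb v := List.get_mem _ _
    simp only [hLb, Finset.mem_sort, Finset.mem_image] at hmem
    obtain ⟨s, hs, hFs⟩ := hmem
    simp only [hAC, Finset.mem_filter, Finset.mem_univ, true_and] at hs
    exact ⟨s, hs.2, hsymm hs.1, by rw [hget, hFs]⟩
  have hdown : ∀ v₁ v₂ : α, v₁ < v₂ → R v₁ v₂ → v₂ ∈ A' → v₁ ∈ A' := by
    intro v₁ v₂ hlt hR hv₂
    have hv₂' : (Lc v₂).idxOf v₂ < k v₂ := hv₂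
    show (Lc v₁).idxOf v₁ < k v₁
    rw [hkeq hR]
    exact lt_trans (hidx hR hlt) hv₂'
  have hmono : ∀ v₁ v₂ : α, v₁ < v₂ → R v₁ v₂ → v₁ ∈ A' → v₂ ∈ A' → ψ v₁ < ψ v₂ := by
    intro v₁ v₂ hlt hR hv₁ hv₂
    have hLbeq : Lb v₁ = Lb v₂ := by simp only [hLb]; rw [hACeq hR]
    have h₁ : (Lc v₁).idxOf v₁ < (Lb v₂).length := by
      rw [hlenLb v₂, ← hkeq hR]; exact hv₁
    have h₂ : (Lc v₂).idxOf v₂ < (Lb v₂).length := by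
      rw [hlenLb v₂]; exact hv₂
    have hg₁ : ψ v₁ = (Lb v₂).get ⟨_, h₁⟩ := by
      rw [hψ]
      simp only
      rw [hLbeq]
      exact List.getD_eq_getElem _ _ h₁
    have hg₂ : ψ v₂ = (Lb v₂).get ⟨_, h₂⟩ := List.getD_eq_getElem _ _ h₂
    rw [hg₁, hg₂]
    exact (Finset.sortedLT_sort _).pairwise.rel_get_of_lt (hidx hR hlt)
  have hinj : Set.InjOn ψ A' := by
    intro v₁ hv₁ v₂ hv₂ heq
    by_contra hne
    by_cases hR : R v₁ v₂
    · rcases Ne.lt_or_gt hne with h | h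
      · exact absurd heq (ne_of_lt (hmono v₁ v₂ h hR hv₁ hv₂))
      · exact absurd heq.symm (ne_of_lt (hmono v₂ v₁ h (hsymm hR) hv₂ hv₁))
    · obtain ⟨s₁, hs₁A, hRs₁, hψ₁⟩ := hpt v₁ hv₁
      obtain ⟨s₂, hs₂A, hRs₂, hψ₂⟩ := hpt v₂ hv₂
      have : s₁ = s₂ := hF hs₁A hs₂A (by rw [← hψ₁, ← hψ₂, heq])
      exact hR (htrans hRs₁ (this ▸ hsymm hRs₂))
  have himg : ψ '' A' = F '' A := by
    apply Set.Subset.antisymm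
    · rintro _ ⟨v, hv, rfl⟩
      obtain ⟨s, hsA, _, hψs⟩ := hpt v hv
      exact ⟨s, hsA, hψs.symm⟩
    · rintro _ ⟨s, hs, rfl⟩
      have hsAC : s ∈ AC s := by
        simp only [hAC, Finset.mem_filter, Finset.mem_univ, true_and]
        exact ⟨hrefl s, hs⟩
      have hmem : F s ∈ Lb s := by
        simp only [hLb, Finset.mem_sort, Finset.mem_image]
        exact ⟨s, hsAC, rfl⟩
      have hj : (Lb s).idxOf (F s) < (Lb s).length := List.idxOf_lt_length_iff.2 hmem
      have hjk : (Lb s).idxOf (F s) < k s := by rw [← hlenLb s]; exact hj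
      have hjc : (Lb s).idxOf (F s) < (Lc s).length := by
        rw [hlenLc s]; exact lt_of_lt_of_le hjk (hkle s)
      set v := (Lc s).get ⟨_, hjc⟩ with hv
      have hvC : v ∈ Lc s := List.get_mem _ _
      have hRvs : R v s := by
        simp only [hLc, Finset.mem_sort] at hvC
        simp only [hC, Finset.mem_filter, Finset.mem_univ, true_and] at hvC
        exact hvC
      have hLceq : Lc v = Lc s := by simp only [hLc]; rw [hCeq hRvs]
      have hidxv : (Lc v).idxOf v = (Lb s).idxOf (F s) := by
        rw [hLceq, hv]
        exact List.get_idxOf (Finset.sort_nodup _ _) _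
      refine ⟨v, ?_, ?_⟩
      · show (Lc v).idxOf v < k v
        rw [hidxv, hkeq hRvs]
        exact hjk
      · show (Lb v).getD ((Lc v).idxOf v) (F v) = F s
        have hLbeq : Lb v = Lb s := by simp only [hLb]; rw [hACeq hRvs]
        rw [hidxv, hLbeq, List.getD_eq_getElem _ _ hj]
        exact List.idxOf_get hj
  have hcard : A'.ncard = A.ncard := by
    rw [← Set.ncard_image_of_injOn hinj, himg, Set.ncard_image_of_injOn hF]
  exact ⟨A', ψ, hinj, himg, hcard, fun v hv =>
    let ⟨s, h1, h2, h3⟩ := hpt v hv; ⟨s, h1, h2, h3⟩, hdown, hmono⟩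

/-- Compatibility of variable and value symmetry breaking: both canonicity conditions
can be enforced simultaneously without losing any mapping size. -/
theorem dual_symmetry_breaking_complete {V W : Type*}
    [Fintype V] [LinearOrder V] [Fintype W] [LinearOrder W]
    (G : SimpleGraph V) (H : SimpleGraph W) (S : Set V) (φ : V → W)
    (hφ : IsCSM G H S φ) :
    ∃ (S' : Set V) (ψ : V → W), IsCSM G H S' ψ ∧ S'.ncard = S.ncard ∧
      (∀ v₁ v₂ : V, v₁ < v₂ → ModularSym G v₁ v₂ → v₂ ∈ S' →
        v₁ ∈ S' ∧ ψ v₁ < ψ v₂) ∧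
      (∀ u₁ u₂ : W, u₁ < u₂ → ModularSym H u₁ u₂ → u₂ ∈ ψ '' S' → u₁ ∈ ψ '' S') := by
  classical
  obtain ⟨hinjφ, hadjφ⟩ := hφ
  rcases isEmpty_or_nonempty W with hW | hW
  · haveI : IsEmpty V := Function.isEmpty φ
    refine ⟨S, φ, ⟨hinjφ, hadjφ⟩, rfl, ?_, ?_⟩
    · intro v₁ v₂ _ _ _; exact (IsEmpty.false v₁).elim
    · intro u₁ u₂ _ _ _; exact (IsEmpty.false u₁).elim
  · obtain ⟨T', ψH, hinjH, himgH, hcardH, hptH, hdownH, hmonoH⟩ :=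
      gadget (R := ModularSym H) (ms_refl H) (fun h => ms_symm H h)
        (fun h1 h2 => ms_trans H h1 h2) (φ '' S) id (Set.injOn_id _)
    set g : W → W := Function.invFunOn ψH T' with hg
    have himgH' : ψH '' T' = φ '' S := by rw [himgH]; exact Set.image_id _
    have hgsp : ∀ x ∈ φ '' S, g x ∈ T' ∧ ψH (g x) = x := by
      intro x hx
      have hex : ∃ a ∈ T', ψH a = x := by
        rw [← himgH'] at hx
        obtain ⟨a, ha, rfl⟩ := hx
        exact ⟨a, ha, rfl⟩
      exact ⟨Function.invFunOn_mem hex, Function.invFunOn_eq hex⟩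
    have hgR : ∀ x ∈ φ '' S, ModularSym H x (g x) := by
      intro x hx
      obtain ⟨hgT, hgx⟩ := hgsp x hx
      obtain ⟨s, hs, hRs, hψs⟩ := hptH (g x) hgT
      have hsx : s = x := by rw [← hgx, hψs]; rfl
      exact ms_symm H (hsx ▸ hRs)
    have hginj : Set.InjOn g (φ '' S) := by
      intro x hx y hy hxy
      rw [← (hgsp x hx).2, ← (hgsp y hy).2, hxy]
    have hgimg : g '' (φ '' S) = T' := by
      apply Set.Subset.antisymm
      · rintro _ ⟨x, hx, rfl⟩
        exact (hgsp x hx).1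
      · intro a ha
        have hx : ψH a ∈ φ '' S := by rw [← himgH']; exact ⟨a, ha, rfl⟩
        exact ⟨ψH a, hx, hinjH (hgsp _ hx).1 ha (hgsp _ hx).2⟩
    have hgφinj : Set.InjOn (g ∘ φ) S :=
      fun a ha b hb h => hinjφ ha hb (hginj ⟨a, ha, rfl⟩ ⟨b, hb, rfl⟩ h)
    obtain ⟨S', ψ, hinj', himg', hcard', hpt', hdown', hmono'⟩ :=
      gadget (R := ModularSym G) (ms_refl G) (fun h => ms_symm G h)
        (fun h1 h2 => ms_trans G h1 h2) S (g ∘ φ) hgφinj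
    refine ⟨S', ψ, ⟨hinj', ?_⟩, hcard', ?_, ?_⟩
    · -- preservation of adjacency
      intro a ha b hb
      rcases eq_or_ne a b with rfl | hne
      · simp
      · obtain ⟨s, hsS, hRa, hψa⟩ := hpt' a ha
        obtain ⟨t, htS, hRb, hψb⟩ := hpt' b hb
        have hψne : ψ a ≠ ψ b := fun h => hne (hinj' ha hb h)
        have hst : s ≠ t := by
          rintro rfl
          exact hψne (by rw [hψa, hψb])
        have hφst : φ s ≠ φ t := fun h => hst (hinjφ hsS htS h)
        have hgne : g (φ s) ≠ g (φ t) := by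
          rw [show g (φ s) = ψ a from hψa.symm, show g (φ t) = ψ b from hψb.symm]
          exact hψne
        calc G.Adj a b ↔ G.Adj s t := adj_transfer G hRa hRb hne hst
          _ ↔ H.Adj (φ s) (φ t) := hadjφ s hsS t htS
          _ ↔ H.Adj (g (φ s)) (g (φ t)) :=
              adj_transfer H (hgR _ ⟨s, hsS, rfl⟩) (hgR _ ⟨t, htS, rfl⟩) hφst hgne
          _ ↔ H.Adj (ψ a) (ψ b) := by
              rw [show ψ a = g (φ s) from hψa, show ψ b = g (φ t) from hψb]
    · -- variable symmetry breaking
      intro v₁ v₂ hlt hms hv₂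
      exact ⟨hdown' v₁ v₂ hlt hms hv₂,
        hmono' v₁ v₂ hlt hms (hdown' v₁ v₂ hlt hms hv₂) hv₂⟩
    · -- value symmetry breaking
      intro u₁ u₂ hlt hms hu₂
      have himgT : ψ '' S' = T' := by
        rw [himg', Set.image_comp]
        exact hgimg
      rw [himgT] at hu₂ ⊢
      exact hdownH u₁ u₂ hlt hms hu₂
end

section
/- Let r be an irreflexive binary relation on a vertex set V (a directed graph without self-loops) and let v, u, w ∈ V with u ≠ v and w ≠ v. Then it is impossible that simultaneously v and u are positively symmetric (In(u) ∪ {u} = In(v) ∪ {v} and Out(u) ∪ {u} = Out(v) ∪ {v}) and v and w are negatively symmetric (In(v) = In(w) and Out(v) = Out(w)). That is, mutual exclusiveness of positive and negative modular symmetry remains valid for directed graphs. -/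
/-- In-neighborhood of a vertex in a directed graph given by a relation. -/
def dIn {V : Type*} (r : V → V → Prop) (v : V) : Set V := {u | r u v}

/-- Out-neighborhood of a vertex in a directed graph given by a relation. -/
def dOut {V : Type*} (r : V → V → Prop) (v : V) : Set V := {u | r v u}

/-- Negative symmetry for directed graphs: equal in- and out-neighborhoods. -/
def DNegSym {V : Type*} (r : V → V → Prop) (u v : V) : Prop :=
  dIn r u = dIn r v ∧ dOut r u = dOut r v

/-- Positive symmetry for directed graphs: equal closed in- and out-neighborhoods. -/
def DPosSym {V : Type*} (r : V → V → Prop) (u v : V) : Prop :=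
  insert u (dIn r u) = insert v (dIn r v) ∧ insert u (dOut r u) = insert v (dOut r v)

/-- Mutual exclusiveness of positive and negative modular symmetry for directed
graphs without self-loops. -/
theorem directed_mutual_exclusiveness {V : Type*} (r : V → V → Prop)
    (hirr : Irreflexive r) (v u w : V) (hu : u ≠ v) (hw : w ≠ v) :
    ¬ (DPosSym r v u ∧ DNegSym r v w) := by
  rintro ⟨⟨hpi, hpo⟩, hni, hno⟩
  -- From positive out-symmetry: u ∈ insert v (dOut r v); u ≠ v gives r v u
  have hvu : r v u := by
    have : u ∈ insert v (dOut r v) := hpo ▸ Set.mem_insert u (dOut r u)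
    rcases this with h | h
    · exact absurd h hu
    · exact h
  -- Transfer via negative out-symmetry: r w u
  have hwu : r w u := by
    have : u ∈ dOut r w := hno ▸ hvu
    exact this
  -- w ∈ dIn r u ⊆ insert u (dIn r u) = insert v (dIn r v)
  have hwv : r w v := by
    have : w ∈ insert v (dIn r v) := hpi ▸ Set.mem_insert_of_mem u hwu
    rcases this with h | h
    · exact absurd h hw
    · exact h
  -- Negative in-symmetry gives r w w, contradicting irreflexivity
  have : w ∈ dIn r w := hni ▸ hwv
  exact hirr w this
end

section
/- Let α be a linearly ordered type, let l be a list over α, and let i < j be indices less than the length of l such that the entry of l at position j is strictly smaller than the entry at position i. Then the list obtained from l by swapping the entries at positions i and j is strictly smaller than l in the lexicographic order on lists induced by the order on α. (This is the key step showing that each symmetry-breaking swap produces a branch that is strictly smaller in value-lexicographical order, ensuring termination of the sequence of hypothetical branches.) -/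
private lemma lex_of_eq_prefix {α : Type*} [LinearOrder α] :
    ∀ (i : ℕ) (l₁ l₂ : List α) (h₁ : i < l₁.length) (h₂ : i < l₂.length),
      (∀ k, k < i → l₁[k]? = l₂[k]?) → l₁[i] < l₂[i] →
      List.Lex (· < ·) l₁ l₂ := by
  intro i
  induction i with
  | zero =>
    intro l₁ l₂ h₁ h₂ _ hlt
    cases l₁ with
    | nil => simp at h₁
    | cons a t₁ =>
      cases l₂ with
      | nil => simp at h₂
      | cons b t₂ =>
        simp only [List.getElem_cons_zero] at hlt
        exact List.Lex.rel hlt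
  | succ n ih =>
    intro l₁ l₂ h₁ h₂ hpre hlt
    cases l₁ with
    | nil => simp at h₁
    | cons a t₁ =>
      cases l₂ with
      | nil => simp at h₂
      | cons b t₂ =>
        have hab : a = b := by
          have := hpre 0 (Nat.succ_pos n)
          simpa using this
        subst hab
        apply List.Lex.cons
        apply ih t₁ t₂ (Nat.lt_of_succ_lt_succ h₁) (Nat.lt_of_succ_lt_succ h₂)
        · intro k hk
          have := hpre (k+1) (Nat.succ_lt_succ hk)
          simpa using this
        · simpa using hlt

/-- Swapping two entries of a list, where the entry at the later position is
strictly smaller, produces a list that is strictly smaller in the lexicographic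
order. This ensures termination of the sequence of symmetry-breaking swaps on
search branches ordered value-lexicographically. -/
theorem swap_lt_lex {α : Type*} [LinearOrder α] (l : List α) (i j : ℕ)
    (hij : i < j) (hj : j < l.length)
    (h : l[j]'hj < l[i]'(hij.trans hj)) :
    List.Lex (· < ·) ((l.set i (l[j]'hj)).set j (l[i]'(hij.trans hj))) l := by
  have hi : i < l.length := hij.trans hj
  refine lex_of_eq_prefix i _ _ (by simpa using hi) hi ?_ ?_
  · intro k hk
    rw [List.getElem?_set_ne (by omega : j ≠ k), List.getElem?_set_ne (by omega : i ≠ k)]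
  · have h1 : ((l.set i (l[j]'hj)).set j (l[i]'hi))[i]'(by simpa using hi) = l[j]'hj := by
      rw [List.getElem_set_ne (by omega), List.getElem_set_self (by simpa using hi)]
    rw [h1]
    exact h
end
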